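/- arXiv:1210.6846 — 3 statements merged into one kernel-verified Lean document; each statement's English description precedes it below -/
import Mathlib

section
/- Let ρ̃ be the periodic extension of ρ to the cycle Z_{N−1} (ρ̃_k = ρ_{((k−1) mod (N−1))+1}), and define S̃_N = ∑_{d=1}^{N−1} ∑_{j=1}^{N−1} ∏_{k=j}^{j+d−1} ρ̃_k and S_N = ∑_{d=1}^{N−1} ∑_{j=1}^{N−d} ∏_{k=j}^{j+d−1} ρ_k. If 0 ≤ ρ_k ≤ α < 1 for all k, then 0 ≤ S̃_N − S_N ≤ ∑_{d=1}^{∞} d·α^d = α/(1−α)^2, a bound independent of N. -/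
/-!
Windows of length `d` that stay inside `[1, N - 1]` contribute the same product to `S̃_N` and
`S_N`, so `S̃_N - S_N` is the sum of the products over the `d - 1` windows that wrap around
the cycle. Each is a product of `d` factors in `[0, α]`, so the wrap-around sum for length `d`
lies in `[0, d α^d]`, and summing over `d` is bounded by `∑ d α^d = α / (1 - α)^2`.
-/

open Finset

namespace Nat

theorem sub_one_mod_add_one_of_mem_Icc {M k : ℕ} (hk : k ∈ Icc 1 M) : (k - 1) % M + 1 = k := by
  rw [mem_Icc] at hk
  rw [Nat.mod_eq_of_lt (by omega)]
  omega

theorem sub_one_mod_add_one_mem_Icc {M : ℕ} (hM : 0 < M) (k : ℕ) :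
    (k - 1) % M + 1 ∈ Icc 1 M := by
  have := Nat.mod_lt (k - 1) hM
  rw [mem_Icc]
  omega

end Nat

theorem sum_window_prod_sub_sum_window_prod {R : Type*} [CommRing R] {f g : ℕ → R} {N d : ℕ}
    (hfg : ∀ k ∈ Icc 1 (N - 1), f k = g k) (hd : d ∈ Icc 1 (N - 1)) :
    ∑ j ∈ Icc 1 (N - 1), ∏ k ∈ Icc j (j + d - 1), g k
        - ∑ j ∈ Icc 1 (N - d), ∏ k ∈ Icc j (j + d - 1), f k
      = ∑ j ∈ Ioc (N - d) (N - 1), ∏ k ∈ Icc j (j + d - 1), g k := by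
  rw [mem_Icc] at hd
  have hinside : ∀ j ∈ Icc 1 (N - d),
      ∏ k ∈ Icc j (j + d - 1), f k = ∏ k ∈ Icc j (j + d - 1), g k := by
    intro j hj
    rw [mem_Icc] at hj
    exact prod_congr rfl fun k hk => hfg k (by rw [mem_Icc] at hk ⊢; omega)
  have hIcc : ∀ n, Icc 1 n = Ioc 0 n := Icc_add_one_left_eq_Ioc 0
  rw [sum_congr rfl hinside, sub_eq_iff_eq_add', hIcc, hIcc,
    sum_Ioc_consecutive _ (Nat.zero_le _) (by omega)]

section Windows

variable {R : Type*} [CommRing R] [LinearOrder R] [IsStrictOrderedRing R]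

theorem prod_Icc_window_le_pow {g : ℕ → R} {a : R} (hg : ∀ k, 0 ≤ g k ∧ g k ≤ a) (j : ℕ)
    {d : ℕ} (hd : 1 ≤ d) : ∏ k ∈ Icc j (j + d - 1), g k ≤ a ^ d := by
  have hcard : #(Icc j (j + d - 1)) = d := by rw [Nat.card_Icc]; omega
  calc ∏ k ∈ Icc j (j + d - 1), g k ≤ ∏ _k ∈ Icc j (j + d - 1), a :=
        prod_le_prod (fun k _ => (hg k).1) (fun k _ => (hg k).2)
    _ = a ^ d := by rw [prod_const, hcard]

theorem sum_window_prod_sub_sum_window_prod_mem_Icc {f g : ℕ → R} {a : R} {N d : ℕ}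
    (hfg : ∀ k ∈ Icc 1 (N - 1), f k = g k) (hg : ∀ k, 0 ≤ g k ∧ g k ≤ a)
    (hd : d ∈ Icc 1 (N - 1)) :
    ∑ j ∈ Icc 1 (N - 1), ∏ k ∈ Icc j (j + d - 1), g k
        - ∑ j ∈ Icc 1 (N - d), ∏ k ∈ Icc j (j + d - 1), f k ∈ Set.Icc 0 (d * a ^ d) := by
  rw [sum_window_prod_sub_sum_window_prod hfg hd, Set.mem_Icc]
  have hd1 : 1 ≤ d := (mem_Icc.1 hd).1
  have ha : 0 ≤ a := (hg 0).1.trans (hg 0).2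
  refine ⟨sum_nonneg fun j _ => prod_nonneg fun k _ => (hg k).1, ?_⟩
  calc ∑ j ∈ Ioc (N - d) (N - 1), ∏ k ∈ Icc j (j + d - 1), g k
      ≤ #(Ioc (N - d) (N - 1)) • a ^ d :=
        sum_le_card_nsmul _ _ _ fun j _ => prod_Icc_window_le_pow hg j hd1
    _ ≤ d • a ^ d := by
        gcongr
        rw [Nat.card_Ioc]; omega
    _ = d * a ^ d := nsmul_eq_mul _ _

end Windows

theorem circle_approximation_general (N : ℕ) (α : ℝ) (hα0 : 0 < α) (hα1 : α < 1)
    (ρ : ℕ → ℝ) (hρ : ∀ k, 1 ≤ k → k ≤ N - 1 → 0 ≤ ρ k ∧ ρ k ≤ α)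
    (ρt : ℕ → ℝ) (hρt : ∀ k, ρt k = ρ ((k - 1) % (N - 1) + 1))
    (St S : ℝ)
    (hSt : St = ∑ d ∈ Finset.Icc 1 (N - 1), ∑ j ∈ Finset.Icc 1 (N - 1),
        ∏ k ∈ Finset.Icc j (j + d - 1), ρt k)
    (hS : S = ∑ d ∈ Finset.Icc 1 (N - 1), ∑ j ∈ Finset.Icc 1 (N - d),
        ∏ k ∈ Finset.Icc j (j + d - 1), ρ k) :
    0 ≤ St - S ∧ St - S ≤ α / (1 - α) ^ 2 ∧
      ∑' d : ℕ, (d : ℝ) * α ^ d = α / (1 - α) ^ 2 := by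
  have hsum : HasSum (fun d : ℕ => (d : ℝ) * α ^ d) (α / (1 - α) ^ 2) :=
    hasSum_coe_mul_geometric_of_norm_lt_one (by rwa [Real.norm_of_nonneg hα0.le])
  have hagree : ∀ k ∈ Icc 1 (N - 1), ρ k = ρt k := fun k hk => by
    rw [hρt, Nat.sub_one_mod_add_one_of_mem_Icc hk]
  have hdiff : ∀ d ∈ Icc 1 (N - 1),
      ∑ j ∈ Icc 1 (N - 1), ∏ k ∈ Icc j (j + d - 1), ρt k
        - ∑ j ∈ Icc 1 (N - d), ∏ k ∈ Icc j (j + d - 1), ρ k ∈ Set.Icc 0 (d * α ^ d) := by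
    intro d hd
    have hM : 0 < N - 1 := by rw [mem_Icc] at hd; omega
    have hbound : ∀ k, 0 ≤ ρt k ∧ ρt k ≤ α := fun k => by
      have hk := mem_Icc.1 (Nat.sub_one_mod_add_one_mem_Icc hM k)
      rw [hρt]
      exact hρ _ hk.1 hk.2
    exact sum_window_prod_sub_sum_window_prod_mem_Icc hagree hbound hd
  rw [hSt, hS, ← sum_sub_distrib]
  refine ⟨sum_nonneg fun d hd => (hdiff d hd).1, ?_, hsum.tsum_eq⟩
  calc _ ≤ ∑ d ∈ Icc 1 (N - 1), (d : ℝ) * α ^ d := sum_le_sum fun d hd => (hdiff d hd).2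
    _ ≤ α / (1 - α) ^ 2 := sum_le_hasSum _ (fun d _ => by positivity) hsum

theorem circle_approximation (N : ℕ) (hN : 2 ≤ N) (α : ℝ) (hα0 : 0 < α) (hα1 : α < 1)
    (ρ : ℕ → ℝ) (hρ : ∀ k, 1 ≤ k → k ≤ N - 1 → 0 ≤ ρ k ∧ ρ k ≤ α)
    (ρt : ℕ → ℝ) (hρt : ∀ k, ρt k = ρ ((k - 1) % (N - 1) + 1))
    (St S : ℝ)
    (hSt : St = ∑ d ∈ Finset.Icc 1 (N - 1), ∑ j ∈ Finset.Icc 1 (N - 1),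
        ∏ k ∈ Finset.Icc j (j + d - 1), ρt k)
    (hS : S = ∑ d ∈ Finset.Icc 1 (N - 1), ∑ j ∈ Finset.Icc 1 (N - d),
        ∏ k ∈ Finset.Icc j (j + d - 1), ρ k) :
    0 ≤ St - S ∧ St - S ≤ α / (1 - α) ^ 2 ∧
      ∑' d : ℕ, (d : ℝ) * α ^ d = α / (1 - α) ^ 2 :=
  circle_approximation_general N α hα0 hα1 ρ hρ ρt hρt St S hSt hS
end

section
/- For 0 ≤ β/α < 1, the function σ(n) = ∑_{i=1}^{M} (β/α)^{n_i} on vectors n = (n_1,...,n_M) of natural numbers with ∑ n_i = D attains its minimum at any vector that is almost constant, i.e. satisfies n_i − n_j ≤ 1 for all i, j. -/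
/-!
The map `k ↦ r ^ k` has nondecreasing increments, since
`r ^ (k + 2) - 2 r ^ (k + 1) + r ^ k = r ^ k (1 - r) ^ 2 ≥ 0`.
For such a discretely convex `f`, the line through `(k, f k)` and `(k + 1, f (k + 1))` lies below
`f` at every natural number. An almost constant vector takes only the values `k` and `k + 1` for
some `k`, where `f` agrees with this line; since the line is affine, its sum over any vector
depends only on the sum of the entries, so `∑ f (m i)` is bounded below by `∑ f (n i)`.
-/

open Finset

def AlmostConstant {ι : Type*} (n : ι → ℕ) : Prop :=
  ∀ i j, n i ≤ n j + 1

theorem AlmostConstant.exists_eq_or_eq_succ {ι : Type*} [Finite ι] {n : ι → ℕ}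
    (hn : AlmostConstant n) : ∃ k, ∀ i, n i = k ∨ n i = k + 1 := by
  cases isEmpty_or_nonempty ι
  · exact ⟨0, isEmptyElim⟩
  · obtain ⟨i₀, hmin⟩ := Finite.exists_min n
    exact ⟨n i₀, fun i => by have := hmin i; have := hn i i₀; omega⟩

section MonotoneIncrements

variable {G : Type*} [AddCommGroup G] [PartialOrder G] [IsOrderedAddMonoid G] {f : ℕ → G}

theorem add_nsmul_sub_le_of_monotone_sub (hf : Monotone fun k => f (k + 1) - f k) (k j : ℕ) :
    f k + j • (f (k + 1) - f k) ≤ f (k + j) := by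
  induction j with
  | zero => simp
  | succ j ih =>
    calc f k + (j + 1) • (f (k + 1) - f k)
        ≤ f (k + j) + (f (k + j + 1) - f (k + j)) := by
          rw [succ_nsmul, ← add_assoc]
          exact add_le_add ih (hf (Nat.le_add_right k j))
      _ = f (k + (j + 1)) := by rw [add_sub_cancel, add_assoc]

theorem le_add_nsmul_sub_of_monotone_sub (hf : Monotone fun k => f (k + 1) - f k) (x j : ℕ) :
    f (x + j) ≤ f x + j • (f (x + j + 1) - f (x + j)) := by
  induction j with
  | zero => simp
  | succ j ih =>
    calc f (x + (j + 1)) = f (x + j) + (f (x + j + 1) - f (x + j)) := by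
          rw [add_sub_cancel, add_assoc]
      _ ≤ f x + (j + 1) • (f (x + (j + 1) + 1) - f (x + (j + 1))) := by
          rw [succ_nsmul, ← add_assoc]
          have hstep := hf (Nat.le_succ (x + j))
          exact add_le_add (ih.trans (add_le_add le_rfl (nsmul_le_nsmul_right hstep j))) hstep

theorem add_zsmul_sub_le_of_monotone_sub (hf : Monotone fun k => f (k + 1) - f k) (k x : ℕ) :
    f k + ((x : ℤ) - k) • (f (k + 1) - f k) ≤ f x := by
  rcases le_total k x with hkx | hxk
  · obtain ⟨j, rfl⟩ := Nat.exists_eq_add_of_le hkx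
    simpa using add_nsmul_sub_le_of_monotone_sub hf k j
  · obtain ⟨j, rfl⟩ := Nat.exists_eq_add_of_le hxk
    have hcoeff : ((x : ℤ) - ↑(x + j)) = -(j : ℤ) := by push_cast; ring
    rw [hcoeff, neg_zsmul, natCast_zsmul, ← sub_eq_add_neg, sub_le_iff_le_add]
    exact le_add_nsmul_sub_of_monotone_sub hf x j

theorem AlmostConstant.sum_le_sum_of_sum_eq {ι : Type*} [Fintype ι] {n m : ι → ℕ}
    (hn : AlmostConstant n) (hf : Monotone fun k => f (k + 1) - f k)
    (hsum : ∑ i, m i = ∑ i, n i) : ∑ i, f (n i) ≤ ∑ i, f (m i) := by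
  obtain ⟨k, hk⟩ := hn.exists_eq_or_eq_succ
  set line : ℕ → G := fun x => f k + ((x : ℤ) - k) • (f (k + 1) - f k)
  have hline_n : ∀ i, f (n i) = line (n i) := fun i => by
    rcases hk i with h | h <;> simp [line, h]
  have hline_sum : ∑ i, line (m i) = ∑ i, line (n i) := by
    have hshift : ∑ i, ((m i : ℤ) - k) = ∑ i, ((n i : ℤ) - k) := by
      simp only [sum_sub_distrib, ← Nat.cast_sum, hsum]
    simp only [line, sum_add_distrib, ← sum_smul, hshift]
  calc ∑ i, f (n i) = ∑ i, line (n i) := sum_congr rfl fun i _ => hline_n i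
    _ = ∑ i, line (m i) := hline_sum.symm
    _ ≤ ∑ i, f (m i) := sum_le_sum fun i _ => add_zsmul_sub_le_of_monotone_sub hf k (m i)

end MonotoneIncrements

theorem monotone_pow_succ_sub_pow {R : Type*} [CommRing R] [LinearOrder R] [IsStrictOrderedRing R]
    {r : R} (hr : 0 ≤ r) : Monotone fun k : ℕ => r ^ (k + 1) - r ^ k :=
  monotone_nat_of_le_succ fun k => by
    have hdiff : r ^ (k + 2) - r ^ (k + 1) - (r ^ (k + 1) - r ^ k) = r ^ k * (1 - r) ^ 2 := by ring
    exact sub_nonneg.mp (hdiff ▸ by positivity)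

theorem almost_constant_minimizes_general (M D : ℕ) (r : ℝ) (hr0 : 0 ≤ r)
    (n : Fin M → ℕ) (hsum : ∑ i, n i = D)
    (hac : ∀ i j, n i ≤ n j + 1) :
    ∀ m : Fin M → ℕ, (∑ i, m i = D) →
      ∑ i, r ^ n i ≤ ∑ i, r ^ m i := fun _ hm =>
  AlmostConstant.sum_le_sum_of_sum_eq (f := (r ^ ·)) hac (monotone_pow_succ_sub_pow hr0)
    (hm.trans hsum.symm)

theorem almost_constant_minimizes (M D : ℕ) (hM : 1 ≤ M) (r : ℝ) (hr0 : 0 ≤ r) (hr1 : r < 1)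
    (n : Fin M → ℕ) (hsum : ∑ i, n i = D)
    (hac : ∀ i j, n i ≤ n j + 1) :
    ∀ m : Fin M → ℕ, (∑ i, m i = D) →
      ∑ i, r ^ n i ≤ ∑ i, r ^ m i :=
  almost_constant_minimizes_general M D r hr0 n hsum hac
end

section
/- Let 0 ≤ β < α < 1. For a configuration of k values equal to β and N−1−k values equal to α arranged on the cycle Z_{N−1}, the quantity S̃_N = ∑_{d=1}^{N−1} ∑_{i=1}^{N−1} (β/α)^{n_i^{(d)}} · α^d (where n_i^{(d)} is the number of β's in the cyclic interval [i, i+d−1]) is minimized over all such configurations by placing the β's at positions ⌊i·(N−1)/k⌋, i = 1,...,k. -/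
open Finset

/-- number of β-positions (elements of `B`) in the cyclic interval `[i, i+d-1]` of `Z_{N-1}`. -/
def betaCount (N : ℕ) (B : Finset (ZMod (N - 1))) (i d : ℕ) : ℕ :=
  ((Finset.range d).filter fun t => (((i + t : ℕ) : ZMod (N - 1)) ∈ B)).card

/-- the cyclic double sum `S̃_N` for the configuration `B` of β-drifts. -/
noncomputable def Stilde (N : ℕ) (α β : ℝ) (B : Finset (ZMod (N - 1))) : ℝ :=
  ∑ d ∈ Finset.Icc 1 (N - 1), ∑ i ∈ Finset.Icc 1 (N - 1),
    (β / α) ^ betaCount N B i d * α ^ d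

/-!
Write `x = β / α ∈ [0, 1]` and `M = N - 1`. For each window length `d`, the inner sum of `S̃_N`
is `α ^ d` times `∑ i, x ^ n_i`, where the counts `n_i` always add up to `d * k`. Since
`n ↦ x ^ n` is convex, such a sum is smallest when the counts are balanced, i.e. all equal to
`⌊d k / M⌋` or one more. The equally spaced configuration is balanced: position `a` is occupied
iff `⌈a k / M⌉ < ⌈(a + 1) k / M⌉`, so the window `[i, i + d)` contains exactly
`⌈(i + d) k / M⌉ - ⌈i k / M⌉` points.
-/

lemma add_mul_sub_le_of_monotone_succ_sub {u : ℕ → ℝ} (hu : Monotone fun n => u (n + 1) - u n)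
    (m n : ℕ) : u m + (u (m + 1) - u m) * ((n : ℝ) - m) ≤ u n := by
  rcases le_or_gt m n with h | h
  · obtain ⟨t, rfl⟩ := Nat.exists_eq_add_of_le h
    have hright : u m + t * (u (m + 1) - u m) ≤ u (m + t) := by
      clear h
      induction t with
      | zero => simp
      | succ t ih =>
        have := hu (Nat.le_add_right m t)
        simp only [add_assoc] at this ⊢
        push_cast
        linarith
    push_cast
    linarith
  · obtain ⟨t, rfl⟩ := Nat.exists_eq_add_of_lt h
    have hleft : u (n + t) ≤ u n + t * (u (n + t + 1) - u (n + t)) := by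
      clear h
      induction t with
      | zero => simp
      | succ t ih =>
        have := hu (Nat.le_add_right (n + t) 1)
        simp only [← add_assoc] at this ⊢
        push_cast
        nlinarith [(Nat.cast_nonneg t : (0 : ℝ) ≤ t)]
    push_cast
    nlinarith [(Nat.cast_nonneg t : (0 : ℝ) ≤ t), hu (Nat.le_add_right (n + t) 1)]

lemma monotone_pow_succ_sub_pow_s11 {x : ℝ} (hx₀ : 0 ≤ x) (hx₁ : x ≤ 1) :
    Monotone fun n : ℕ => x ^ (n + 1) - x ^ n := by
  intro m n hmn
  have := pow_le_pow_of_le_one hx₀ hx₁ hmn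
  simp only [pow_succ]
  nlinarith

lemma sum_le_sum_of_balanced {ι : Type*} (s : Finset ι) {u : ℕ → ℝ}
    (hu : Monotone fun n => u (n + 1) - u n) {a b : ι → ℕ} {m : ℕ}
    (ha : ∀ i ∈ s, a i = m ∨ a i = m + 1) (hab : ∑ i ∈ s, a i = ∑ i ∈ s, b i) :
    ∑ i ∈ s, u (a i) ≤ ∑ i ∈ s, u (b i) := by
  -- `u` lies above its secant `L` through `m` and `m + 1`, and agrees with it at both points.
  set L : ℕ → ℝ := fun n => u m + (u (m + 1) - u m) * ((n : ℝ) - m)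
  have hL : ∀ c : ι → ℕ,
      ∑ i ∈ s, L (c i) = #s * u m + (u (m + 1) - u m) * (∑ i ∈ s, (c i : ℝ) - #s * m) := by
    intro c
    simp only [L, sum_add_distrib, ← mul_sum, sum_sub_distrib, sum_const, nsmul_eq_mul]
  calc ∑ i ∈ s, u (a i) = ∑ i ∈ s, L (a i) := by
        refine sum_congr rfl fun i hi => ?_
        rcases ha i hi with h | h <;> simp [L, h]
    _ = ∑ i ∈ s, L (b i) := by rw [hL, hL, ← Nat.cast_sum, ← Nat.cast_sum, hab]
    _ ≤ ∑ i ∈ s, u (b i) := sum_le_sum fun i _ => add_mul_sub_le_of_monotone_succ_sub hu m (b i)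

lemma betaCount_eq_card {N : ℕ} (hN : 2 ≤ N) (B : Finset (ZMod (N - 1))) (i : ℕ) :
    betaCount N B i (N - 1) = #B := by
  have : NeZero (N - 1) := ⟨by omega⟩
  refine card_nbij' (fun t => ((i + t : ℕ) : ZMod (N - 1))) (fun z => (z - i).val) ?_ ?_ ?_ ?_
  · intro t ht
    exact (mem_filter.mp ht).2
  · intro z hz
    simp only [coe_filter, mem_range, Set.mem_ofPred_eq, Nat.cast_add, ZMod.natCast_val,
      ZMod.cast_id', id, add_sub_cancel]
    exact ⟨ZMod.val_lt _, hz⟩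
  · intro t ht
    simp only [coe_filter, mem_range, Set.mem_ofPred_eq] at ht
    simp [ZMod.val_cast_of_lt ht.1]
  · intro z _
    simp

lemma sum_betaCount {N : ℕ} (hN : 2 ≤ N) (B : Finset (ZMod (N - 1))) (d : ℕ) :
    ∑ i ∈ Icc 1 (N - 1), betaCount N B i d = d * #B := by
  simp only [betaCount, card_filter]
  rw [sum_comm, ← Ico_add_one_right_eq_Icc]
  have hwindow : ∀ t, ∑ i ∈ Ico 1 (N - 1 + 1), (if ((i + t : ℕ) : ZMod (N - 1)) ∈ B then 1 else 0)
      = betaCount N B (1 + t) (N - 1) := by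
    intro t
    rw [sum_Ico_eq_sum_range, betaCount, card_filter, Nat.add_sub_cancel]
    simp only [add_right_comm 1 _ t]
  simp only [hwindow, betaCount_eq_card hN, sum_const, card_range, smul_eq_mul]

section CeilDiv

variable {M : ℕ}

lemma mul_ceilDiv_lt (hM : 0 < M) (x : ℕ) : M * (x ⌈/⌉ M) < x + M := by
  rw [Nat.ceilDiv_eq_add_pred_div, mul_comm]
  have := Nat.div_mul_le_self (x + M - 1) M
  omega

lemma add_mul_ceilDiv (hM : 0 < M) (x q : ℕ) : (x + M * q) ⌈/⌉ M = x ⌈/⌉ M + q := by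
  rw [Nat.ceilDiv_eq_add_pred_div, Nat.ceilDiv_eq_add_pred_div, ← Nat.add_mul_div_left _ _ hM]
  congr 1
  omega

lemma add_ceilDiv_sub_ceilDiv (hM : 0 < M) (x y : ℕ) :
    (x + y) ⌈/⌉ M - x ⌈/⌉ M = y / M ∨ (x + y) ⌈/⌉ M - x ⌈/⌉ M = y / M + 1 := by
  have hx := le_smul_ceilDiv (b := x) hM
  have hxy := le_smul_ceilDiv (b := x + y) hM
  have hx' := mul_ceilDiv_lt hM x
  have hxy' := mul_ceilDiv_lt hM (x + y)
  have hy := Nat.div_mul_le_self y M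
  have hy' := Nat.lt_mul_div_succ y hM
  simp only [smul_eq_mul] at hx hxy
  have lower : x ⌈/⌉ M + y / M < (x + y) ⌈/⌉ M + 1 := by
    refine Nat.lt_of_mul_lt_mul_left (a := M) ?_
    rw [mul_add, mul_add, mul_comm M (y / M)]
    omega
  have upper : (x + y) ⌈/⌉ M < x ⌈/⌉ M + (y / M + 1) + 1 := by
    refine Nat.lt_of_mul_lt_mul_left (a := M) ?_
    rw [mul_add, mul_add, mul_one]
    omega
  generalize y / M = q at *
  omega

variable {k : ℕ}

lemma div_eq_iff_ceilDiv (hk : 0 < k) (hM : 0 < M) (j a : ℕ) :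
    j * M / k = a ↔ a * k ⌈/⌉ M ≤ j ∧ j < (a + 1) * k ⌈/⌉ M := by
  rw [← not_le, ceilDiv_le_iff_le_mul hM, ceilDiv_le_iff_le_mul hM, not_le, mul_comm M j,
    ← Nat.le_div_iff_mul_le hk, ← Nat.div_lt_iff_lt_mul hk]
  omega

lemma succ_mul_ceilDiv_le (hM : 0 < M) (hkM : k ≤ M) (a : ℕ) :
    (a + 1) * k ⌈/⌉ M ≤ a * k ⌈/⌉ M + 1 := by
  rw [ceilDiv_le_iff_le_mul hM, mul_add, add_mul, one_mul, mul_one]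
  exact add_le_add (le_smul_ceilDiv hM) hkM

lemma mul_ceilDiv_lt_succ_iff_mod (hM : 0 < M) (a : ℕ) :
    a * k ⌈/⌉ M < (a + 1) * k ⌈/⌉ M ↔ a % M * k ⌈/⌉ M < (a % M + 1) * k ⌈/⌉ M := by
  have h₀ : a * k = a % M * k + M * (a / M * k) := by
    conv_lhs => rw [← Nat.mod_add_div a M]
    ring
  have h₁ : (a + 1) * k = (a % M + 1) * k + M * (a / M * k) := by
    conv_lhs => rw [← Nat.mod_add_div a M]
    ring
  rw [h₀, h₁, add_mul_ceilDiv hM, add_mul_ceilDiv hM, Nat.add_lt_add_iff_right]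

end CeilDiv

def equallySpaced (N k : ℕ) : Finset (ZMod (N - 1)) :=
  (Icc 1 k).image fun i => ((i * (N - 1) / k : ℕ) : ZMod (N - 1))

section EquallySpaced

variable {N k : ℕ}

lemma natCast_mem_equallySpaced_iff (hN : 2 ≤ N) (hk : 0 < k) (a : ℕ) :
    (a : ZMod (N - 1)) ∈ equallySpaced N k ↔ a * k ⌈/⌉ (N - 1) < (a + 1) * k ⌈/⌉ (N - 1) := by
  have hM : 0 < N - 1 := by omega
  rw [mul_ceilDiv_lt_succ_iff_mod hM]
  constructor
  · simp only [equallySpaced, mem_image, mem_Icc]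
    rintro ⟨j, -, hj⟩
    rw [ZMod.natCast_eq_natCast_iff'] at hj
    rw [← hj, ← mul_ceilDiv_lt_succ_iff_mod hM]
    obtain ⟨hlo, hhi⟩ := (div_eq_iff_ceilDiv hk hM j _).mp rfl
    exact hlo.trans_lt hhi
  · intro h
    set j := a % (N - 1) * k ⌈/⌉ (N - 1)
    have hj : j * (N - 1) / k = a % (N - 1) := (div_eq_iff_ceilDiv hk hM _ _).mpr ⟨le_rfl, h⟩
    have hjk : j < k := by
      by_contra! hkj
      have := Nat.div_le_div_right (c := k) (Nat.mul_le_mul_right (N - 1) hkj)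
      rw [Nat.mul_div_cancel_left _ hk, hj] at this
      exact (Nat.mod_lt a hM).not_ge this
    rcases Nat.eq_zero_or_pos j with h0 | hpos
    · refine mem_image.mpr ⟨k, mem_Icc.mpr ⟨hk, le_rfl⟩, ?_⟩
      rw [h0, Nat.zero_mul, Nat.zero_div] at hj
      rw [Nat.mul_div_cancel_left _ hk, ZMod.natCast_self, eq_comm,
        ZMod.natCast_eq_zero_iff]
      exact Nat.dvd_of_mod_eq_zero hj.symm
    · refine mem_image.mpr ⟨j, mem_Icc.mpr ⟨hpos, hjk.le⟩, ?_⟩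
      rw [hj, ZMod.natCast_mod]

lemma betaCount_equallySpaced (hN : 2 ≤ N) (hk : 0 < k) (hkN : k ≤ N - 1) (i d : ℕ) :
    betaCount N (equallySpaced N k) i d = (i + d) * k ⌈/⌉ (N - 1) - i * k ⌈/⌉ (N - 1) := by
  have hM : 0 < N - 1 := by omega
  have hc : Monotone fun t => (i + t) * k ⌈/⌉ (N - 1) :=
    (gc_mul_ceilDiv hM).monotone_l.comp fun a b h => Nat.mul_le_mul_right k (by omega)
  have htel := sum_range_tsub hc d
  rw [add_zero] at htel
  rw [betaCount, card_filter, ← htel]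
  refine sum_congr rfl fun t _ => ?_
  have hstep := succ_mul_ceilDiv_le hM hkN (i + t)
  have hmono := hc (Nat.le_add_right t 1)
  simp only [← add_assoc] at hmono ⊢
  split_ifs with hmem <;> rw [natCast_mem_equallySpaced_iff hN hk] at hmem <;> omega

lemma card_equallySpaced (hN : 2 ≤ N) (hk : 0 < k) (hkN : k ≤ N - 1) :
    #(equallySpaced N k) = k := by
  have hM : 0 < N - 1 := by omega
  rw [← betaCount_eq_card hN _ 0, betaCount_equallySpaced hN hk hkN, zero_mul, zero_ceilDiv,
    Nat.sub_zero, zero_add]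
  simpa using add_mul_ceilDiv hM 0 k

lemma betaCount_equallySpaced_eq_or_eq (hN : 2 ≤ N) (hk : 0 < k) (hkN : k ≤ N - 1) (i d : ℕ) :
    betaCount N (equallySpaced N k) i d = d * k / (N - 1) ∨
      betaCount N (equallySpaced N k) i d = d * k / (N - 1) + 1 := by
  rw [betaCount_equallySpaced hN hk hkN, add_mul]
  exact add_ceilDiv_sub_ceilDiv (by omega) _ _

end EquallySpaced

theorem equally_spaced_minimizes_Stilde_general (N k : ℕ) (hN : 2 ≤ N)
    (hk : 1 ≤ k) (hkN : k ≤ N - 1) (α β : ℝ) (hβ : 0 ≤ β) (hβα : β < α) :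
    ∀ B : Finset (ZMod (N - 1)), B.card = k →
      Stilde N α β ((Finset.Icc 1 k).image fun i => ((i * (N - 1) / k : ℕ) : ZMod (N - 1)))
        ≤ Stilde N α β B := by
  intro B hB
  change Stilde N α β (equallySpaced N k) ≤ _
  have hα : 0 < α := hβ.trans_lt hβα
  have hconvex : Monotone fun n : ℕ => (β / α) ^ (n + 1) - (β / α) ^ n :=
    monotone_pow_succ_sub_pow_s11 (div_nonneg hβ hα.le) ((div_le_one hα).mpr hβα.le)
  refine sum_le_sum fun d _ => ?_
  simp only [← sum_mul]
  refine mul_le_mul_of_nonneg_right ?_ (pow_nonneg hα.le d)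
  refine sum_le_sum_of_balanced _ hconvex
    (fun i _ => betaCount_equallySpaced_eq_or_eq hN hk hkN i d) ?_
  rw [sum_betaCount hN, sum_betaCount hN, card_equallySpaced hN hk hkN, hB]

theorem equally_spaced_minimizes_Stilde (N k : ℕ) (hN : 2 ≤ N)
    (hk : 1 ≤ k) (hkN : k ≤ N - 1) (α β : ℝ) (hβ : 0 ≤ β) (hβα : β < α) (hα : α < 1) :
    ∀ B : Finset (ZMod (N - 1)), B.card = k →
      Stilde N α β ((Finset.Icc 1 k).image fun i => ((i * (N - 1) / k : ℕ) : ZMod (N - 1)))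
        ≤ Stilde N α β B :=
  equally_spaced_minimizes_Stilde_general N k hN hk hkN α β hβ hβα
end
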